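/- arXiv:2410.21654 — 2 statements merged into one kernel-verified Lean document; each statement's English description precedes it below -/
import Mathlib

section
/- Let A be a quasitriangular bialgebra over a field F, B a right coideal subalgebra of A, and (ψ, J, K) a cylindrical structure on (A, B), with tensor K-matrix 𝕂 = (R^ψ)₂₁·(1⊗K)·R. Then for all b in B, 𝕂·Δ(b) = ((id⊗ψ)(Δ(b)))·𝕂 in A⊗A. -/
/-!
Move `Δ(b)` leftwards through `𝕂 = (R^ψ)₂₁ (1 ⊗ K) R`. Passing `R` turns it into `Δ(b)₂₁`.
Since `Δ(b) ∈ B ⊗ A`, the `B`-leg of `Δ(b)₂₁` sits in the second factor, where `1 ⊗ K` acts on it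
by `ψ`, giving `((ψ ⊗ id)Δ(b))₂₁`. Together with `(R^ψ)₂₁` this is `((ψ ⊗ id)(R Δ(b)))₂₁`, and the
R-matrix relation `R Δ(b) = Δ(b)₂₁ R` used once more turns it into `(id ⊗ ψ)Δ(b) · (R^ψ)₂₁`.
-/

open TensorProduct

noncomputable section

variable (F : Type*) [Field F]

section BialgDefs

variable (A : Type*) [Ring A] [Bialgebra F A]

/-- Conjugation by an invertible element, as an algebra automorphism. -/
def conjEquiv (g gi : A) (h1 : g * gi = 1) (h2 : gi * g = 1) : A ≃ₐ[F] A where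
  toFun a := g * a * gi
  invFun a := gi * a * g
  left_inv a := by simp only [← mul_assoc]; rw [h2, one_mul, mul_assoc, h2, mul_one]
  right_inv a := by simp only [← mul_assoc]; rw [h1, one_mul, mul_assoc, h1, mul_one]
  map_mul' a b := by
    show g * (a * b) * gi = (g * a * gi) * (g * b * gi)
    simp only [mul_assoc]; rw [← mul_assoc gi g, h2, one_mul]
  map_add' a b := by
    show g * (a + b) * gi = g * a * gi + g * b * gi
    rw [mul_add, add_mul]
  commutes' r := by
    show g * algebraMap F A r * gi = algebraMap F A r
    rw [← Algebra.commutes r g, mul_assoc, h1, mul_one]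

/-- The coproduct of `A`, as an algebra map. -/
def cop : A →ₐ[F] A ⊗[F] A := Bialgebra.comulAlgHom F A

/-- The flip of the two tensor legs. -/
def flipT : (A ⊗[F] A) ≃ₐ[F] A ⊗[F] A := Algebra.TensorProduct.comm F A A

/-- The opposite coproduct. -/
def copOp : A →ₐ[F] A ⊗[F] A := (flipT F A).toAlgHom.comp (cop F A)

/-- `X ↦ X₁₂` on triple tensors. -/
def i12 : (A ⊗[F] A) →ₐ[F] A ⊗[F] (A ⊗[F] A) :=
  Algebra.TensorProduct.map (AlgHom.id F A) Algebra.TensorProduct.includeLeft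

/-- `X ↦ X₁₃` on triple tensors. -/
def i13 : (A ⊗[F] A) →ₐ[F] A ⊗[F] (A ⊗[F] A) :=
  Algebra.TensorProduct.map (AlgHom.id F A) Algebra.TensorProduct.includeRight

/-- `X ↦ X₂₃` on triple tensors. -/
def i23 : (A ⊗[F] A) →ₐ[F] A ⊗[F] (A ⊗[F] A) :=
  Algebra.TensorProduct.includeRight

/-- `Δ ⊗ id` landing in `A ⊗ (A ⊗ A)`. -/
def cop12 : (A ⊗[F] A) →ₐ[F] A ⊗[F] (A ⊗[F] A) :=
  (Algebra.TensorProduct.assoc F F F A A A).toAlgHom.comp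
    (Algebra.TensorProduct.map (cop F A) (AlgHom.id F A))

/-- `id ⊗ Δ`. -/
def cop23 : (A ⊗[F] A) →ₐ[F] A ⊗[F] (A ⊗[F] A) :=
  Algebra.TensorProduct.map (AlgHom.id F A) (cop F A)

/-- `ε ⊗ id`. -/
def counit2l : (A ⊗[F] A) →ₐ[F] A :=
  (Algebra.TensorProduct.lid F A).toAlgHom.comp
    (Algebra.TensorProduct.map (Bialgebra.counitAlgHom F A) (AlgHom.id F A))

/-- `id ⊗ ε`. -/
def counit2r : (A ⊗[F] A) →ₐ[F] A :=
  (Algebra.TensorProduct.rid F F A).toAlgHom.comp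
    (Algebra.TensorProduct.map (AlgHom.id F A) (Bialgebra.counitAlgHom F A))

/-- `ψ ⊗ φ` on `A ⊗ A`. -/
def mapT (ψ φ : A →ₐ[F] A) : (A ⊗[F] A) →ₐ[F] A ⊗[F] A := Algebra.TensorProduct.map ψ φ

/-- `R^ψ = (ψ ⊗ id)(R)`. -/
def rpsi (R : A ⊗[F] A) (ψ : A ≃ₐ[F] A) : A ⊗[F] A :=
  Algebra.TensorProduct.map ψ.toAlgHom (AlgHom.id F A) R

/-- `A` is quasitriangular with R-matrix `R` (with inverse `Ri`). -/
structure IsQT (R Ri : A ⊗[F] A) : Prop where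
  mulInv : R * Ri = 1
  invMul : Ri * R = 1
  intw : ∀ a : A, R * cop F A a * Ri = copOp F A a
  copL : cop12 F A R = i13 F A R * i23 F A R
  copR : cop23 F A R = i13 F A R * i12 F A R

/-- `(ψ, J)` is a twist pair (with `Ji` the inverse of `J`). -/
structure IsTwistPair (R Ri J Ji : A ⊗[F] A) (ψ : A ≃ₐ[F] A) : Prop where
  mulInv : J * Ji = 1
  invMul : Ji * J = 1
  cocycle : i12 F A J * cop12 F A J = i23 F A J * cop23 F A J
  counitL : counit2l F A J = 1
  counitR : counit2r F A J = 1
  intw : ∀ a : A,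
    mapT F A ψ.toAlgHom ψ.toAlgHom (copOp F A (ψ.symm a)) = J * cop F A a * Ji
  rrel : flipT F A (mapT F A ψ.toAlgHom ψ.toAlgHom R) = flipT F A J * R * Ji

/-- The image of `s ⊗ A` inside `A ⊗ A`, for a subset `s ⊆ A`. -/
def legSpan (s : Set A) : Submodule F (A ⊗[F] A) :=
  Submodule.span F {x : A ⊗[F] A | ∃ b ∈ s, ∃ a : A, x = b ⊗ₜ[F] a}

/-- `B` is a right coideal subalgebra of `A`. -/
def IsRightCoideal (B : Subalgebra F A) : Prop :=
  ∀ b ∈ B, cop F A b ∈ legSpan F A (B : Set A)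

/-- The tensor K-matrix `𝕂 = (R^ψ)₂₁ ⬝ (1 ⊗ K) ⬝ R`. -/
def tenK (R : A ⊗[F] A) (ψ : A ≃ₐ[F] A) (K : A) : A ⊗[F] A :=
  flipT F A (rpsi F A R ψ) * ((1 : A) ⊗ₜ[F] K) * R

/-- `(ψ, J, K)` is a cylindrical structure on `(A, B)`. -/
structure IsCylindrical (R Ri : A ⊗[F] A) (B : Subalgebra F A) (J Ji : A ⊗[F] A)
    (ψ : A ≃ₐ[F] A) (K Kinv : A) : Prop where
  twist : IsTwistPair F A R Ri J Ji ψ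
  kMulInv : K * Kinv = 1
  kInvMul : Kinv * K = 1
  intwB : ∀ b ∈ B, K * b * Kinv = ψ b
  support : tenK F A R ψ K ∈ legSpan F A (B : Set A)
  copK : cop F A K = Ji * (((1 : A) ⊗ₜ[F] K) * (rpsi F A R ψ * (K ⊗ₜ[F] (1 : A))))

end BialgDefs

section ModuleDefs

variable (A : Type*) [Ring A] [Bialgebra F A]

/-- Right partial transpose on `End V ⊗ End W`. -/
def pt2 (V W : Type*) [AddCommGroup V] [Module F V] [AddCommGroup W] [Module F W] :
    (Module.End F V ⊗[F] Module.End F W) →ₗ[F]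
      (Module.End F V ⊗[F] Module.End F (Module.Dual F W)) :=
  TensorProduct.map LinearMap.id (Module.Dual.transpose (R := F) (M := W) (M' := W))

/-- Identification `End V ⊗ End (W^∨∨) ≃ End V ⊗ End W` via the canonical iso `W ≅ W^∨∨`. -/
def ddIdent (V W : Type*) [AddCommGroup V] [Module F V] [AddCommGroup W] [Module F W]
    [FiniteDimensional F W] :
    (Module.End F V ⊗[F] Module.End F (Module.Dual F (Module.Dual F W))) →ₗ[F]
      (Module.End F V ⊗[F] Module.End F W) :=
  TensorProduct.map LinearMap.id ((Module.evalEquiv F W).conj.symm).toLinearMap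

/-- The right partial trace `A ⊗ End V → A`. -/
def trace2 (V : Type*) [AddCommGroup V] [Module F V] :
    (A ⊗[F] Module.End F V) →ₗ[F] A :=
  (TensorProduct.rid F A).toLinearMap.comp
    (TensorProduct.map LinearMap.id (LinearMap.trace F V))

/-- `T_{•,V}`: act with the second leg on `V`. -/
def actRight (V : Type*) [AddCommGroup V] [Module F V] (ρV : A →ₐ[F] Module.End F V) :
    (A ⊗[F] A) →ₐ[F] A ⊗[F] Module.End F V :=
  Algebra.TensorProduct.map (AlgHom.id F A) ρV

/-- The boundary transfer matrix `Tr₂(𝕂₍•,V₎)`. -/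
def transfer (V : Type*) [AddCommGroup V] [Module F V] (ρV : A →ₐ[F] Module.End F V)
    (T : A ⊗[F] A) : A :=
  trace2 F A V (actRight F A V ρV T)

/-- The module structure on `V ⊗ W` obtained from `Δ`. -/
def tensorRep (V W : Type*) [AddCommGroup V] [Module F V] [AddCommGroup W] [Module F W]
    (ρV : A →ₐ[F] Module.End F V) (ρW : A →ₐ[F] Module.End F W) :
    A →ₐ[F] Module.End F (V ⊗[F] W) :=
  (Module.endTensorEndAlgHom (R := F) (S := F) (A := F) (M := V) (N := W)).comp
    ((Algebra.TensorProduct.map ρV ρW).comp (cop F A))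

/-- `g` (with inverse `gi`) is a boundary gauge transformation for the twist pair `(ψ, J)`. -/
def IsBoundaryGauge (R J : A ⊗[F] A) (ψ : A ≃ₐ[F] A) (g gi : A)
    (hg1 : g * gi = 1) (hg2 : gi * g = 1) : Prop :=
  ∀ (V W : Type) [AddCommGroup V] [Module F V] [FiniteDimensional F V]
    [AddCommGroup W] [Module F W] [FiniteDimensional F W]
    (ρV : A →ₐ[F] Module.End F V) (ρW : A →ₐ[F] Module.End F W),
    let X := pt2 F V W
      ((Algebra.TensorProduct.map
        (ρV.comp (ψ.trans (conjEquiv F A g gi hg1 hg2)).toAlgHom) ρW) R)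
    IsUnit X ∧ IsUnit (pt2 F V (Module.Dual F W) (Ring.inverse X)) ∧
      (Algebra.TensorProduct.map ρV ρW) ((g ⊗ₜ[F] g) * J * cop F A gi) =
        ddIdent F V W (Ring.inverse (pt2 F V (Module.Dual F W) (Ring.inverse X)))

end ModuleDefs

theorem mul_eq_mul_of_mul_mul_eq {M : Type*} [Monoid M] {k k' x y : M}
    (hk : k' * k = 1) (h : k * x * k' = y) : k * x = y * k := by
  rw [← h, mul_assoc _ k', hk, mul_one]

section

variable {F} {A : Type*} [Ring A] [Bialgebra F A]

theorem IsQT.mul_cop {R Ri : A ⊗[F] A} (hQT : IsQT F A R Ri) (a : A) :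
    R * cop F A a = flipT F A (cop F A a) * R :=
  mul_eq_mul_of_mul_mul_eq hQT.invMul (hQT.intw a)

theorem IsCylindrical.mul_eq_mul_of_mem {R Ri J Ji : A ⊗[F] A} {B : Subalgebra F A}
    {ψ : A ≃ₐ[F] A} {K Kinv : A} (hcyl : IsCylindrical F A R Ri B J Ji ψ K Kinv)
    {b : A} (hb : b ∈ B) :
    K * b = ψ b * K :=
  mul_eq_mul_of_mul_mul_eq hcyl.kInvMul (hcyl.intwB b hb)

theorem one_tmul_mul_flipT_of_mem_legSpan {s : Set A} (φ : A →ₐ[F] A) {k : A}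
    (hk : ∀ b ∈ s, k * b = φ b * k) {x : A ⊗[F] A} (hx : x ∈ legSpan F A s) :
    ((1 : A) ⊗ₜ[F] k) * flipT F A x
      = flipT F A (mapT F A φ (AlgHom.id F A) x) * ((1 : A) ⊗ₜ[F] k) := by
  induction hx using Submodule.span_induction with
  | mem x hx =>
    obtain ⟨b, hb, a, rfl⟩ := hx
    simp only [flipT, mapT, Algebra.TensorProduct.comm_tmul, Algebra.TensorProduct.map_tmul,
      Algebra.TensorProduct.tmul_mul_tmul, one_mul, mul_one, AlgHom.coe_id, id_eq, hk b hb]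
  | zero => simp
  | add x y _ _ hx hy => simp only [map_add, mul_add, add_mul, hx, hy]
  | smul c x _ hx => simp only [map_smul, mul_smul_comm, smul_mul_assoc, hx]

theorem flipT_mapT_flipT (φ φ' : A →ₐ[F] A) (x : A ⊗[F] A) :
    flipT F A (mapT F A φ φ' (flipT F A x)) = mapT F A φ' φ x := by
  induction x using TensorProduct.induction_on with
  | zero => simp
  | tmul a c => rfl
  | add x y hx hy => simp only [map_add, hx, hy]

end

/-- the tensor K-matrix intertwines `Δ` and `(id ⊗ ψ) ∘ Δ` on `B`. -/
theorem statement3 {F A : Type*} [Field F] [Ring A] [Bialgebra F A]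
    (R Ri : A ⊗[F] A) (hQT : IsQT F A R Ri)
    (B : Subalgebra F A) (hB : IsRightCoideal F A B)
    (J Ji : A ⊗[F] A) (ψ : A ≃ₐ[F] A) (K Kinv : A)
    (hcyl : IsCylindrical F A R Ri B J Ji ψ K Kinv) :
    ∀ b ∈ B, tenK F A R ψ K * cop F A b =
      (mapT F A (AlgHom.id F A) ψ.toAlgHom) (cop F A b) * tenK F A R ψ K := by
  intro b hb
  have hrpsi : rpsi F A R ψ = mapT F A ψ.toAlgHom (AlgHom.id F A) R := rfl
  have hK : ((1 : A) ⊗ₜ[F] K) * flipT F A (cop F A b)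
      = flipT F A (mapT F A ψ.toAlgHom (AlgHom.id F A) (cop F A b)) * ((1 : A) ⊗ₜ[F] K) :=
    one_tmul_mul_flipT_of_mem_legSpan ψ.toAlgHom (fun _ hx => hcyl.mul_eq_mul_of_mem hx)
      (hB b hb)
  calc tenK F A R ψ K * cop F A b
      = flipT F A (rpsi F A R ψ) * (((1 : A) ⊗ₜ[F] K) * flipT F A (cop F A b)) * R := by
        rw [tenK, mul_assoc _ R, hQT.mul_cop]
        simp only [mul_assoc]
    _ = flipT F A (mapT F A ψ.toAlgHom (AlgHom.id F A) (R * cop F A b))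
          * (((1 : A) ⊗ₜ[F] K) * R) := by
        rw [hK, map_mul, map_mul, hrpsi]
        simp only [mul_assoc]
    _ = mapT F A (AlgHom.id F A) ψ.toAlgHom (cop F A b) * tenK F A R ψ K := by
        rw [hQT.mul_cop, map_mul, map_mul, flipT_mapT_flipT, tenK, hrpsi]
        simp only [mul_assoc]

end
end

section
/- Let A be a Hopf algebra over a field F with bijective antipode S, quasitriangular with R-matrix R, and let D be a sovereign element of A. Let (ψ, J) be a twist pair for A and g an invertible element of A such that (g⊗g)·J·Δ(g)⁻¹ = (g⊗D)·R^ψ·(g⊗D)⁻¹. Then g is a boundary gauge transformation for (ψ, J). -/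
open TensorProduct

noncomputable section

variable (F : Type*) [Field F]

/-!
The partial transpose `t₂` reverses products in the second tensor leg, so it is an algebra map
out of `End V ⊗ (End W)ᵐᵒᵖ`; likewise `id ⊗ S` is an algebra map `A ⊗ A → A ⊗ Aᵐᵒᵖ`.
Applying `id ⊗ m ∘ (id ⊗ S)` to `(id ⊗ Δ)(R⁻¹) = R⁻¹₁₂ R⁻¹₁₃` gives `(id ⊗ S)(R⁻¹) = R`, hence
`(id ⊗ S)(R)` is the inverse of `R` in `A ⊗ Aᵐᵒᵖ`, and `X = (R_{V^{ψᵍ},W})^{t₂}` is invertible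
with inverse `((id ⊗ S)(R)_{V^{ψᵍ},W})^{t₂}`. Transposing twice is conjugation by `W ≅ W^∨∨`,
and `S² = Ad D` turns `(id ⊗ S)(R)` into `(1 ⊗ D) R⁻¹ (1 ⊗ D)⁻¹`. Its inverse
`(1 ⊗ D) R (1 ⊗ D)⁻¹`, evaluated on `V^{ψᵍ} ⊗ W`, is `((g ⊗ D) R^ψ (g ⊗ D)⁻¹)_{V,W}`.
-/

variable {F}

lemma isUnit_and_inverse_eq_of_mul_eq_one {M₀ : Type*} [MonoidWithZero M₀] {a b : M₀}
    (hab : a * b = 1) (hba : b * a = 1) : IsUnit a ∧ Ring.inverse a = b :=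
  ⟨⟨⟨a, b, hab, hba⟩, rfl⟩, Ring.inverse_unit ⟨a, b, hab, hba⟩⟩

section Conjugation

variable {A : Type*} [Ring A] [Bialgebra F A]

lemma map_conjEquiv_trans_map_conjEquiv {C B : Type*} [Ring C] [Ring B] [Algebra F C]
    [Algebra F B] (f : A →ₐ[F] C) (k : A →ₐ[F] B) (ψ : A ≃ₐ[F] A)
    (g gi h hi : A) (hg1 : g * gi = 1) (hg2 : gi * g = 1)
    (hh1 : h * hi = 1) (hh2 : hi * h = 1) (x : A ⊗[F] A) :
    Algebra.TensorProduct.map (f.comp (ψ.trans (conjEquiv F A g gi hg1 hg2)).toAlgHom) k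
        (Algebra.TensorProduct.map (AlgHom.id F A) (conjEquiv F A h hi hh1 hh2).toAlgHom x) =
      Algebra.TensorProduct.map f k ((g ⊗ₜ[F] h) * rpsi F A x ψ * (gi ⊗ₜ[F] hi)) := by
  unfold rpsi
  induction x using TensorProduct.induction_on with
  | zero => simp
  | add x y hx hy => simp only [map_add, hx, hy, mul_add, add_mul]
  | tmul a b => simp [conjEquiv, Algebra.TensorProduct.tmul_mul_tmul]

end Conjugation

section Counit

variable {A : Type*} [Ring A] [Bialgebra F A]

lemma counit2r_tmul (a b : A) :
    counit2r F A (a ⊗ₜ[F] b) = Coalgebra.counit (R := F) b • a := by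
  simp [counit2r]

lemma counit2r_cop (a : A) : counit2r F A (cop F A a) = a := by
  have h : Algebra.TensorProduct.map (AlgHom.id F A) (Bialgebra.counitAlgHom F A) (cop F A a)
      = a ⊗ₜ[F] (1 : F) := Coalgebra.lTensor_counit_comul (R := F) a
  simp [counit2r, h]

lemma map_counit2r_cop23 (x : A ⊗[F] A) :
    Algebra.TensorProduct.map (AlgHom.id F A) (counit2r F A) (cop23 F A x) = x := by
  induction x using TensorProduct.induction_on with
  | zero => simp
  | add x y hx hy => simp only [map_add, hx, hy]
  | tmul a b => simp [cop23, counit2r_cop]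

lemma map_counit2r_i12 (x : A ⊗[F] A) :
    Algebra.TensorProduct.map (AlgHom.id F A) (counit2r F A) (i12 F A x) = x := by
  induction x using TensorProduct.induction_on with
  | zero => simp
  | add x y hx hy => simp only [map_add, hx, hy]
  | tmul a b => simp [i12, counit2r_tmul]

lemma map_counit2r_i13 (x : A ⊗[F] A) :
    Algebra.TensorProduct.map (AlgHom.id F A) (counit2r F A) (i13 F A x) =
      counit2r F A x ⊗ₜ[F] 1 := by
  induction x using TensorProduct.induction_on with
  | zero => simp
  | add x y hx hy => simp only [map_add, hx, hy, TensorProduct.add_tmul]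
  | tmul a b => simp [i13, counit2r_tmul, TensorProduct.smul_tmul]

namespace IsQT

variable {R Ri : A ⊗[F] A}

lemma counit2r_eq_one (hQT : IsQT F A R Ri) : counit2r F A R = 1 := by
  have hR := congrArg (Algebra.TensorProduct.map (AlgHom.id F A) (counit2r F A)) hQT.copR
  rw [map_mul, map_counit2r_cop23, map_counit2r_i13, map_counit2r_i12] at hR
  have h1 : counit2r F A R ⊗ₜ[F] (1 : A) = 1 := by
    calc counit2r F A R ⊗ₜ[F] (1 : A) = (counit2r F A R ⊗ₜ[F] (1 : A)) * R * Ri := by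
          rw [mul_assoc, hQT.mulInv, mul_one]
      _ = 1 := by rw [← hR, hQT.mulInv]
  simpa [counit2r_tmul] using congrArg (counit2r F A) h1

lemma counit2r_inv_eq_one (hQT : IsQT F A R Ri) : counit2r F A Ri = 1 := by
  simpa [hQT.counit2r_eq_one] using congrArg (counit2r F A) hQT.mulInv

lemma cop23_inv (hQT : IsQT F A R Ri) : cop23 F A Ri = i12 F A Ri * i13 F A Ri := by
  refine left_inv_eq_right_inv (a := cop23 F A R) ?_ ?_
  · rw [← map_mul, hQT.invMul, map_one]
  · rw [hQT.copR, mul_assoc, ← mul_assoc (i12 F A R), ← map_mul, hQT.mulInv, map_one, one_mul,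
      ← map_mul, hQT.mulInv, map_one]

end IsQT

end Counit

def opRight (C B : Type*) [Ring C] [Ring B] [Algebra F C] [Algebra F B] :
    (C ⊗[F] B) ≃ₗ[F] C ⊗[F] Bᵐᵒᵖ :=
  TensorProduct.congr (LinearEquiv.refl F C) (MulOpposite.opLinearEquiv F)

section Antipode

variable {A : Type*} [Ring A] [HopfAlgebra F A]

def lTensorMulAntipode : (A ⊗[F] (A ⊗[F] A)) →ₗ[F] A ⊗[F] A :=
  LinearMap.lTensor A (LinearMap.mul' F A ∘ₗ LinearMap.lTensor A (HopfAlgebra.antipode F))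

lemma lTensorMulAntipode_cop23 (x : A ⊗[F] A) :
    lTensorMulAntipode (cop23 F A x) = counit2r F A x ⊗ₜ[F] 1 := by
  induction x using TensorProduct.induction_on with
  | zero => simp
  | add x y hx hy => simp only [map_add, hx, hy, TensorProduct.add_tmul]
  | tmul a b =>
    simp [lTensorMulAntipode, cop23, cop, counit2r_tmul, Algebra.algebraMap_eq_smul_one,
      TensorProduct.smul_tmul]

lemma lTensorMulAntipode_i12_mul_i13 (x y : A ⊗[F] A) :
    lTensorMulAntipode (i12 F A x * i13 F A y) =
      x * LinearMap.lTensor A (HopfAlgebra.antipode F) y := by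
  induction x using TensorProduct.induction_on with
  | zero => simp
  | add x x' hx hx' => simp only [map_add, add_mul, hx, hx']
  | tmul a b =>
    induction y using TensorProduct.induction_on with
    | zero => simp
    | add y y' hy hy' => simp only [map_add, mul_add, hy, hy']
    | tmul c d => simp [lTensorMulAntipode, i12, i13, Algebra.TensorProduct.tmul_mul_tmul]

lemma opRight_lTensor_antipode (x : A ⊗[F] A) :
    opRight A A (LinearMap.lTensor A (HopfAlgebra.antipode F) x) =
      Algebra.TensorProduct.map (AlgHom.id F A) (HopfAlgebra.antipodeAlgHomOp F A) x := by
  induction x using TensorProduct.induction_on with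
  | zero => simp
  | add x y hx hy => simp only [map_add, hx, hy]
  | tmul a b => rfl

lemma lTensor_antipode_antipode {D Di : A} (hD1 : D * Di = 1) (hD2 : Di * D = 1)
    (hDS : ∀ a : A, D * a * Di =
      HopfAlgebra.antipode (R := F) (HopfAlgebra.antipode (R := F) a)) (x : A ⊗[F] A) :
    LinearMap.lTensor A (HopfAlgebra.antipode F) (LinearMap.lTensor A (HopfAlgebra.antipode F) x) =
      Algebra.TensorProduct.map (AlgHom.id F A) (conjEquiv F A D Di hD1 hD2).toAlgHom x := by
  induction x using TensorProduct.induction_on with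
  | zero => simp
  | add x y hx hy => simp only [map_add, hx, hy]
  | tmul a b => simp [conjEquiv, hDS]

namespace IsQT

variable {R Ri : A ⊗[F] A}

lemma lTensor_antipode_inv (hQT : IsQT F A R Ri) :
    LinearMap.lTensor A (HopfAlgebra.antipode F) Ri = R := by
  have h := congrArg lTensorMulAntipode hQT.cop23_inv
  rw [lTensorMulAntipode_cop23, lTensorMulAntipode_i12_mul_i13, hQT.counit2r_inv_eq_one,
    ← Algebra.TensorProduct.one_def] at h
  exact (left_inv_eq_right_inv hQT.mulInv h.symm).symm

lemma opRight_mul_opRight_lTensor_antipode (hQT : IsQT F A R Ri) :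
    opRight A A R * opRight A A (LinearMap.lTensor A (HopfAlgebra.antipode F) R) = 1 ∧
      opRight A A (LinearMap.lTensor A (HopfAlgebra.antipode F) R) * opRight A A R = 1 := by
  have hR : opRight A A R =
      Algebra.TensorProduct.map (AlgHom.id F A) (HopfAlgebra.antipodeAlgHomOp F A) Ri := by
    rw [← opRight_lTensor_antipode, hQT.lTensor_antipode_inv]
  rw [hR, opRight_lTensor_antipode, ← map_mul, ← map_mul, hQT.invMul, hQT.mulInv, map_one]
  exact ⟨rfl, rfl⟩

lemma lTensor_antipode (hQT : IsQT F A R Ri) {D Di : A} (hD1 : D * Di = 1) (hD2 : Di * D = 1)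
    (hDS : ∀ a : A, D * a * Di =
      HopfAlgebra.antipode (R := F) (HopfAlgebra.antipode (R := F) a)) :
    LinearMap.lTensor A (HopfAlgebra.antipode F) R =
      Algebra.TensorProduct.map (AlgHom.id F A) (conjEquiv F A D Di hD1 hD2).toAlgHom Ri := by
  rw [← lTensor_antipode_antipode hD1 hD2 hDS, hQT.lTensor_antipode_inv]

end IsQT

end Antipode

section PartialTranspose

def transposeAlgHom (W : Type*) [AddCommGroup W] [Module F W] :
    (Module.End F W)ᵐᵒᵖ →ₐ[F] Module.End F (Module.Dual F W) :=
  AlgHom.ofLinearMap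
    (Module.Dual.transpose ∘ₗ (MulOpposite.opLinearEquiv F).symm.toLinearMap)
    (by ext; simp [Module.Dual.transpose_apply])
    (fun p q => by ext; simp [Module.Dual.transpose_apply])

variable {V W : Type*} [AddCommGroup V] [Module F V] [AddCommGroup W] [Module F W]

lemma pt2_map {C B : Type*} [Ring C] [Ring B] [Algebra F C] [Algebra F B]
    (f : C →ₐ[F] Module.End F V) (h : B →ₐ[F] Module.End F W) (x : C ⊗[F] B) :
    pt2 F V W (Algebra.TensorProduct.map f h x) =
      Algebra.TensorProduct.map f ((transposeAlgHom W).comp (AlgHom.op h)) (opRight C B x) := by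
  induction x using TensorProduct.induction_on with
  | zero => simp
  | add x y hx hy => simp only [map_add, hx, hy]
  | tmul c b => rfl

lemma transpose_transpose_eq_conj [Module.IsReflexive F W] (q : Module.End F W) :
    Module.Dual.transpose (R := F) (Module.Dual.transpose (R := F) q) =
      (Module.evalEquiv F W).conj q := by
  rw [← LinearMap.dualMap_def, ← LinearMap.dualMap_def,
    ← Module.Dual.eval_comp_comp_evalEquiv_eq]
  rfl

lemma pt2_pt2 [Module.IsReflexive F W] (z : Module.End F V ⊗[F] Module.End F W) :
    pt2 F V (Module.Dual F W) (pt2 F V W z) =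
      Algebra.TensorProduct.map (AlgHom.id F _)
        ((Module.evalEquiv F W).conjAlgEquiv F).toAlgHom z := by
  induction z using TensorProduct.induction_on with
  | zero => simp
  | add x y hx hy => simp only [map_add, hx, hy]
  | tmul p q =>
    simp only [pt2, TensorProduct.map_tmul, transpose_transpose_eq_conj]
    rfl

lemma isUnit_pt2_map_and_inverse_eq {C B : Type*} [Ring C] [Ring B] [Algebra F C]
    [Algebra F B] (f : C →ₐ[F] Module.End F V) (h : B →ₐ[F] Module.End F W) {x y : C ⊗[F] B}
    (hxy : opRight C B x * opRight C B y = 1) (hyx : opRight C B y * opRight C B x = 1) :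
    IsUnit (pt2 F V W (Algebra.TensorProduct.map f h x)) ∧
      Ring.inverse (pt2 F V W (Algebra.TensorProduct.map f h x)) =
        pt2 F V W (Algebra.TensorProduct.map f h y) := by
  simp only [pt2_map]
  exact isUnit_and_inverse_eq_of_mul_eq_one (by rw [← map_mul, hxy, map_one])
    (by rw [← map_mul, hyx, map_one])

lemma isUnit_pt2_pt2_and_inverse_eq [Module.IsReflexive F W]
    {x y : Module.End F V ⊗[F] Module.End F W} (hxy : x * y = 1) (hyx : y * x = 1) :
    IsUnit (pt2 F V (Module.Dual F W) (pt2 F V W x)) ∧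
      Ring.inverse (pt2 F V (Module.Dual F W) (pt2 F V W x)) =
        pt2 F V (Module.Dual F W) (pt2 F V W y) := by
  simp only [pt2_pt2]
  exact isUnit_and_inverse_eq_of_mul_eq_one (by rw [← map_mul, hxy, map_one])
    (by rw [← map_mul, hyx, map_one])

lemma ddIdent_pt2_pt2 [FiniteDimensional F W] (z : Module.End F V ⊗[F] Module.End F W) :
    ddIdent F V W (pt2 F V (Module.Dual F W) (pt2 F V W z)) = z := by
  induction z using TensorProduct.induction_on with
  | zero => simp
  | add x y hx hy => simp only [map_add, hx, hy]
  | tmul p q => simp [ddIdent, pt2, transpose_transpose_eq_conj]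

end PartialTranspose

theorem statement11_general {F A : Type*} [Field F] [Ring A] [HopfAlgebra F A]
    (R Ri : A ⊗[F] A) (hQT : IsQT F A R Ri)
    (D Di : A) (hD1 : D * Di = 1) (hD2 : Di * D = 1)
    (hDS : ∀ a : A, D * a * Di =
      HopfAlgebra.antipode (R := F) (HopfAlgebra.antipode (R := F) a))
    (J : A ⊗[F] A) (ψ : A ≃ₐ[F] A)
    (g gi : A) (hg1 : g * gi = 1) (hg2 : gi * g = 1)
    (hrel : (g ⊗ₜ[F] g) * J * cop F A gi =
      (g ⊗ₜ[F] D) * rpsi F A R ψ * (gi ⊗ₜ[F] Di)) :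
    IsBoundaryGauge F A R J ψ g gi hg1 hg2 := by
  intro V W _ _ _ _ _ _ ρV ρW X
  set ρ := ρV.comp (ψ.trans (conjEquiv F A g gi hg1 hg2)).toAlgHom
  set π := Algebra.TensorProduct.map ρ ρW
  set cD := Algebra.TensorProduct.map (AlgHom.id F A) (conjEquiv F A D Di hD1 hD2).toAlgHom
  obtain ⟨hRu, huR⟩ := hQT.opRight_mul_opRight_lTensor_antipode
  rw [hQT.lTensor_antipode hD1 hD2 hDS] at hRu huR
  obtain ⟨hX, hXinv⟩ := isUnit_pt2_map_and_inverse_eq ρ ρW hRu huR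
  obtain ⟨hY, hYinv⟩ := isUnit_pt2_pt2_and_inverse_eq (x := π (cD Ri)) (y := π (cD R))
    (by rw [← map_mul, ← map_mul, hQT.invMul, map_one, map_one])
    (by rw [← map_mul, ← map_mul, hQT.mulInv, map_one, map_one])
  refine ⟨hX, hXinv ▸ hY, ?_⟩
  rw [hXinv, hYinv, ddIdent_pt2_pt2, hrel, map_conjEquiv_trans_map_conjEquiv]

/-- if `(g ⊗ g) ⬝ J ⬝ Δ(g)⁻¹ = (g ⊗ D) ⬝ R^ψ ⬝ (g ⊗ D)⁻¹` then `g` is a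
boundary gauge transformation for `(ψ, J)`. -/
theorem statement11 {F A : Type*} [Field F] [Ring A] [HopfAlgebra F A]
    (hS : Function.Bijective (HopfAlgebra.antipode (R := F) (A := A)))
    (R Ri : A ⊗[F] A) (hQT : IsQT F A R Ri)
    (D Di : A) (hD1 : D * Di = 1) (hD2 : Di * D = 1)
    (hDgl : cop F A D = D ⊗ₜ[F] D) (hDe : Bialgebra.counitAlgHom F A D = 1)
    (hDS : ∀ a : A, D * a * Di =
      HopfAlgebra.antipode (R := F) (HopfAlgebra.antipode (R := F) a))
    (J Ji : A ⊗[F] A) (ψ : A ≃ₐ[F] A) (hTP : IsTwistPair F A R Ri J Ji ψ)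
    (g gi : A) (hg1 : g * gi = 1) (hg2 : gi * g = 1)
    (hrel : (g ⊗ₜ[F] g) * J * cop F A gi =
      (g ⊗ₜ[F] D) * rpsi F A R ψ * (gi ⊗ₜ[F] Di)) :
    IsBoundaryGauge F A R J ψ g gi hg1 hg2 :=
  statement11_general R Ri hQT D Di hD1 hD2 hDS J ψ g gi hg1 hg2 hrel

end
end
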